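/- arXiv:1103.2511 — 3 statements merged into one kernel-verified Lean document; each statement's English description precedes it below -/
import Mathlib

section
/- Let A →(β) B →(θ) C be an exact sequence of complexes such that C/Im(θ) is an 𝒳-complex. Then for every 𝒳-injective complex I, the induced sequence Hom(C,I) → Hom(B,I) → Hom(A,I) of chain-map groups is exact. -/
open CategoryTheory CategoryTheory.Limits

/-- The category of cochain complexes of `R`-modules indexed by `ℤ`. -/
abbrev Cx (R : Type) [Ring R] := CochainComplex (ModuleCat.{0} R) ℤ

variable {R : Type} [Ring R]

/-- `C` is an `𝒳`-complex: every component lies in the class `𝒳`. -/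
def IsXCx (𝒳 : Set (ModuleCat.{0} R)) (C : Cx R) : Prop := ∀ n : ℤ, C.X n ∈ 𝒳

/-- `P` is an `𝒳`-projective module: maps from `P` lift along surjections with kernel in `𝒳`. -/
def XProjMod (𝒳 : Set (ModuleCat.{0} R)) (P : ModuleCat.{0} R) : Prop :=
  ∀ (A B : ModuleCat.{0} R) (p : A ⟶ B), Function.Surjective p →
    ModuleCat.of R (LinearMap.ker p.hom) ∈ 𝒳 →
    ∀ h : P ⟶ B, ∃ g : P ⟶ A, g ≫ p = h

/-- `E` is an `𝒳`-injective module: maps into `E` extend along injections with cokernel in `𝒳`. -/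
def XInjMod (𝒳 : Set (ModuleCat.{0} R)) (E : ModuleCat.{0} R) : Prop :=
  ∀ (A B : ModuleCat.{0} R) (i : A ⟶ B), Function.Injective i →
    ModuleCat.of R (↥B ⧸ LinearMap.range i.hom) ∈ 𝒳 →
    ∀ f : A ⟶ E, ∃ g : B ⟶ E, i ≫ g = f

/-- `C` is an `𝒳`-projective complex: chain maps from `C` lift along surjective chain maps
whose kernel complex has all components in `𝒳`. -/
def XProjCx (𝒳 : Set (ModuleCat.{0} R)) (C : Cx R) : Prop :=
  ∀ (A B : Cx R) (φ : A ⟶ B), (∀ n, Function.Surjective (φ.f n)) →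
    (∀ n, ModuleCat.of R (LinearMap.ker (φ.f n).hom) ∈ 𝒳) →
    ∀ f : C ⟶ B, ∃ h : C ⟶ A, h ≫ φ = f

/-- `C` is an `𝒳`-injective complex: chain maps into `C` extend along injective chain maps
whose cokernel complex has all components in `𝒳`. -/
def XInjCx (𝒳 : Set (ModuleCat.{0} R)) (C : Cx R) : Prop :=
  ∀ (A B : Cx R) (φ : A ⟶ B), (∀ n, Function.Injective (φ.f n)) →
    (∀ n, ModuleCat.of R (↥(B.X n) ⧸ LinearMap.range (φ.f n).hom) ∈ 𝒳) →
    ∀ f : A ⟶ C, ∃ g : B ⟶ C, φ ≫ g = f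

/-- The complex `... → 0 → A →(f) B → 0 → ...` with `A` in degree 0 and `B` in degree 1. -/
noncomputable def DblMap {A B : ModuleCat.{0} R} (f : A ⟶ B) : Cx R where
  X n := if n = 0 then A else if n = 1 then B else ModuleCat.of R PUnit
  d i j :=
    if h : i = 0 ∧ j = 1 then
      eqToHom (by rw [h.1]; simp) ≫ f ≫ eqToHom (by rw [h.2]; simp)
    else 0
  shape i j hij := by
    rw [dif_neg]
    rintro ⟨rfl, rfl⟩
    exact hij rfl
  d_comp_d' i j k _ _ := by
    by_cases h : i = 0 ∧ j = 1
    · obtain ⟨rfl, rfl⟩ := h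
      rw [dif_neg (show ¬((1:ℤ) = 0 ∧ k = 1) by omega), comp_zero]
    · rw [dif_neg h, zero_comp]

/-- The complex `... → 0 → P →(id) P → 0 → ...` (`P` in degrees 0 and 1, identity differential). -/
noncomputable def Dbl (P : ModuleCat.{0} R) : Cx R := DblMap (𝟙 P)

/-- Membership in `ε₁`: exact complexes all of whose kernels lie in `𝒳`. -/
def Eps1 (𝒳 : Set (ModuleCat.{0} R)) (E : Cx R) : Prop :=
  (∀ n : ℤ, E.ExactAt n) ∧ ∀ n : ℤ, ModuleCat.of R (LinearMap.ker (E.d n (n+1)).hom) ∈ 𝒳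

/-- `Ext¹(A, C) = 0` in the category of complexes: every short exact sequence
`0 → C → W → A → 0` of complexes splits. -/
def Ext1IsZero (A C : Cx R) : Prop :=
  ∀ (W : Cx R) (i : C ⟶ W) (p : W ⟶ A),
    (∀ n, Function.Injective (i.f n)) → (∀ n, Function.Surjective (p.f n)) →
    (∀ n, LinearMap.range (i.f n).hom = LinearMap.ker (p.f n).hom) →
    ∃ r : W ⟶ C, i ≫ r = 𝟙 C

/-- A complex is bounded if its components vanish outside finitely many degrees. -/
def Bounded (C : Cx R) : Prop := ∃ a b : ℤ, ∀ n : ℤ, (n < a ∨ b < n) → Limits.IsZero (C.X n)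

/-!
Since `range β = ker θ`, a chain map `u : B ⟶ I` with `β ≫ u = 0` vanishes on `ker θ`, so it
descends along the degreewise surjection `B ⟶ im θ`. The inclusion `im θ ⟶ C` is degreewise
injective with cokernel `C / im θ`, an `𝒳`-complex, so the `𝒳`-injectivity of `I` extends the
descended map to `C`.
-/

universe v

lemma ModuleCat.exists_comp_eq_of_surjective_of_ker_le {M N P : ModuleCat.{v} R} (f : M ⟶ N)
    (hf : Function.Surjective f) (g : M ⟶ P) (hfg : LinearMap.ker f.hom ≤ LinearMap.ker g.hom) :
    ∃ g' : N ⟶ P, f ≫ g' = g :=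
  ⟨ModuleCat.ofHom ((LinearMap.ker f.hom).liftQ g.hom hfg ∘ₗ
      (f.hom.quotKerEquivOfSurjective hf).symm.toLinearMap), by
    ext x
    simp [LinearMap.quotKerEquivOfSurjective_symm_apply]⟩

section ModuleComplexes

variable {ι : Type*} {c : ComplexShape ι}

lemma HomologicalComplex.exists_comp_eq_of_surjective_of_ker_le
    {B D I : HomologicalComplex (ModuleCat.{v} R) c} (p : B ⟶ D)
    (hp : ∀ n, Function.Surjective (p.f n)) (u : B ⟶ I)
    (hpu : ∀ n, LinearMap.ker (p.f n).hom ≤ LinearMap.ker (u.f n).hom) :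
    ∃ w : D ⟶ I, p ≫ w = u := by
  choose w hw using fun n =>
    ModuleCat.exists_comp_eq_of_surjective_of_ker_le (p.f n) (hp n) (u.f n) (hpu n)
  have : ∀ n, Epi (p.f n) := fun n => (ModuleCat.epi_iff_surjective _).2 (hp n)
  refine ⟨{ f := w, comm' := fun i j _ => ?_ }, HomologicalComplex.hom_ext _ _ hw⟩
  rw [← cancel_epi (p.f i), reassoc_of% hw i, p.comm_assoc, hw j, u.comm]

variable {B C : HomologicalComplex (ModuleCat.{v} R) c} (θ : B ⟶ C)

noncomputable def imageCx : HomologicalComplex (ModuleCat.{v} R) c where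
  X n := ModuleCat.of R (LinearMap.range (θ.f n).hom)
  d i j := ModuleCat.ofHom <| (C.d i j).hom.restrict <| by
    rintro _ ⟨b, rfl⟩
    exact ⟨B.d i j b, congr($(θ.comm i j).hom b).symm⟩
  shape i j h := by
    ext x
    simp [C.shape i j h]
  d_comp_d' i j k _ _ := by
    ext x
    simp [← ModuleCat.comp_apply]

noncomputable def factorThruImageCx : B ⟶ imageCx θ where
  f n := ModuleCat.ofHom (θ.f n).hom.rangeRestrict
  comm' i j _ := by
    ext x
    exact Subtype.ext congr($(θ.comm i j).hom x)

noncomputable def imageCxι : imageCx θ ⟶ C where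
  f n := ModuleCat.ofHom (LinearMap.range (θ.f n).hom).subtype

lemma factorThruImageCx_comp_imageCxι : factorThruImageCx θ ≫ imageCxι θ = θ := by
  ext; rfl

lemma factorThruImageCx_surjective (n : ι) :
    Function.Surjective ((factorThruImageCx θ).f n) :=
  (θ.f n).hom.surjective_rangeRestrict

lemma ker_factorThruImageCx (n : ι) :
    LinearMap.ker ((factorThruImageCx θ).f n).hom = LinearMap.ker (θ.f n).hom :=
  (θ.f n).hom.ker_rangeRestrict

lemma imageCxι_injective (n : ι) : Function.Injective ((imageCxι θ).f n) :=
  Subtype.coe_injective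

lemma range_imageCxι (n : ι) :
    LinearMap.range ((imageCxι θ).f n).hom = LinearMap.range (θ.f n).hom :=
  Submodule.range_subtype _

lemma HomologicalComplex.comp_eq_zero_of_range_le_ker
    {A : HomologicalComplex (ModuleCat.{v} R) c} (β : A ⟶ B)
    (h : ∀ n, LinearMap.range (β.f n).hom ≤ LinearMap.ker (θ.f n).hom) : β ≫ θ = 0 := by
  ext n a
  exact h n ⟨a, rfl⟩

end ModuleComplexes

lemma XInjCx.exists_comp_eq_of_ker_le {𝒳 : Set (ModuleCat.{0} R)} {I : Cx R} (hI : XInjCx 𝒳 I)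
    {B C : Cx R} (θ : B ⟶ C)
    (hcoker : ∀ n, ModuleCat.of R (↥(C.X n) ⧸ LinearMap.range (θ.f n).hom) ∈ 𝒳) (u : B ⟶ I)
    (hu : ∀ n, LinearMap.ker (θ.f n).hom ≤ LinearMap.ker (u.f n).hom) :
    ∃ v : C ⟶ I, θ ≫ v = u := by
  obtain ⟨w, hw⟩ := HomologicalComplex.exists_comp_eq_of_surjective_of_ker_le
    (factorThruImageCx θ) (factorThruImageCx_surjective θ) u
    fun n => ker_factorThruImageCx θ n ▸ hu n
  obtain ⟨v, hv⟩ := hI _ _ (imageCxι θ) (imageCxι_injective θ)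
    (fun n => range_imageCxι θ n ▸ hcoker n) w
  exact ⟨v, by rw [← factorThruImageCx_comp_imageCxι θ, Category.assoc, hv, hw]⟩

/-- If `A →(β) B →(θ) C` is exact with `C/Im θ` an `𝒳`-complex, then for every
`𝒳`-injective complex `I` the sequence `Hom(C,I) → Hom(B,I) → Hom(A,I)` is exact. -/
theorem stmt4 (𝒳 : Set (ModuleCat.{0} R)) (A B C : Cx R) (β : A ⟶ B) (θ : B ⟶ C)
    (hexact : ∀ n, LinearMap.range (β.f n).hom = LinearMap.ker (θ.f n).hom)
    (hcoker : ∀ n, ModuleCat.of R (↥(C.X n) ⧸ LinearMap.range (θ.f n).hom) ∈ 𝒳)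
    (I : Cx R) (hI : XInjCx 𝒳 I) :
    ∀ u : B ⟶ I, β ≫ u = 0 ↔ ∃ v : C ⟶ I, θ ≫ v = u := by
  intro u
  constructor
  · intro hu
    refine hI.exists_comp_eq_of_ker_le θ hcoker u fun n b hb => ?_
    rw [← hexact n] at hb
    obtain ⟨a, rfl⟩ := hb
    exact congr(($hu).f n a)
  · rintro ⟨v, rfl⟩
    rw [← Category.assoc,
      HomologicalComplex.comp_eq_zero_of_range_le_ker θ β fun n => (hexact n).le, zero_comp]
end

section
/- If X : ... → X_{n+1} → X_n → X_{n-1} → ... is an 𝒳-injective complex, then each component module X_n is an 𝒳-injective R-module. -/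
open CategoryTheory CategoryTheory.Limits

variable {R : Type} [Ring R]

/-!
Let `C(M)` be the complex with `M` in every degree, differential `𝟙 M` from degree `n` to `n + 1`
and `0` elsewhere. A map `M ⟶ Xₙ` is the degree-`n` component of a chain map `C(M) ⟶ X`, and an
injection `i : A ⟶ B` induces an injective chain map `C(A) ⟶ C(B)` whose cokernel is `B ⧸ A` in
every degree. Extending chain maps into `X` along it extends maps into `Xₙ` along `i`.
-/

/-- Padding with `M` outside degrees `n`, `n + 1` (instead of `0`, as for the disk on `M`) makes
the cokernel of `paddedDisk.map i` equal to that of `i` in every degree; `𝒳` need not contain `0`. -/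
noncomputable def paddedDisk (M : ModuleCat.{0} R) (n : ℤ) : Cx R where
  X _ := M
  d i j := if i = n ∧ j = n + 1 then 𝟙 M else 0
  shape i j hij := if_neg fun h => hij (by simp [ComplexShape.up_Rel, h.1, h.2])
  d_comp_d' i j k hij hjk := by
    simp only [ComplexShape.up_Rel] at hij hjk
    split_ifs <;> first | omega | simp

namespace paddedDisk

variable {M N : ModuleCat.{0} R} {n : ℤ}

noncomputable def map (u : M ⟶ N) : paddedDisk M n ⟶ paddedDisk N n where
  f _ := u
  comm' i j _ := by
    simp only [paddedDisk]
    split_ifs <;> simp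

noncomputable def desc {X : Cx R} (f : M ⟶ X.X n) : paddedDisk M n ⟶ X where
  -- `X.d n m` vanishes unless `m = n + 1`
  f m := if h : m = n then f ≫ (X.XIsoOfEq h.symm).hom else f ≫ X.d n m
  comm' i j hij := by
    simp only [ComplexShape.up_Rel] at hij
    subst hij
    simp only [paddedDisk]
    by_cases h : i = n
    · subst h
      simp
    · simp [h]

@[simp] lemma desc_f_self {X : Cx R} (f : M ⟶ X.X n) : (desc f).f n = f := by
  simp only [desc, dif_pos]
  exact Category.comp_id f

end paddedDisk

theorem stmt5_general (𝒳 : Set (ModuleCat.{0} R))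
    (X : Cx R) (hX : XInjCx 𝒳 X) : ∀ n : ℤ, XInjMod 𝒳 (X.X n) := by
  intro n A B i hi hQ f
  obtain ⟨g, hg⟩ := hX _ _ (paddedDisk.map (n := n) i) (fun _ => hi) (fun _ => hQ)
    (paddedDisk.desc f)
  have hgn := HomologicalComplex.congr_hom hg n
  rw [HomologicalComplex.comp_f, paddedDisk.desc_f_self] at hgn
  exact ⟨g.f n, hgn⟩

/-- Each component of an `𝒳`-injective complex is an `𝒳`-injective module
(for `𝒳` closed under isomorphism). -/
theorem stmt5 (𝒳 : Set (ModuleCat.{0} R))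
    (hiso : ∀ A B : ModuleCat.{0} R, A ∈ 𝒳 → Nonempty (A ≅ B) → B ∈ 𝒳)
    (X : Cx R) (hX : XInjCx 𝒳 X) : ∀ n : ℤ, XInjMod 𝒳 (X.X n) :=
  stmt5_general 𝒳 X hX
end

section
/- Let X be an 𝒳-injective complex and suppose E(X)/X is an 𝒳-complex, where E(X) is the injective envelope of X in the category of complexes. Then X = E(X); in particular X is an injective, hence exact, complex. More generally, if X ⊆ Y with Y/X an 𝒳-complex, then X is a direct summand of Y. -/
open CategoryTheory CategoryTheory.Limits

variable {R : Type} [Ring R]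

/-!
An `𝒳`-injective complex `X` splits off every extension `X ⊆ Y` with `Y/X` an `𝒳`-complex:
extend the identity of `X` along the inclusion. A split monomorphism which is essential is an
isomorphism, since the retraction `r` satisfies `i ≫ r = 𝟙` (a mono) and hence is itself mono.
So `X ≅ E(X)` is injective. Finally an injective complex `X` is contractible: the inclusion of
`X` into the mapping cone of `𝟙 X` is a degreewise split mono and is null-homotopic, so a
retraction of it exhibits `𝟙 X` as null-homotopic; in particular `X` is exact.
-/

lemma isIso_of_isSplitMono_of_essential {C : Type*} [Category C] {A B : C} (i : A ⟶ B)
    [IsSplitMono i] (hess : ∀ (Z : C) (g : B ⟶ Z), Mono (i ≫ g) → Mono g) : IsIso i := by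
  have : Mono (retraction i) := hess A (retraction i) (by rw [IsSplitMono.id]; infer_instance)
  exact ⟨retraction i, IsSplitMono.id i, by simp [← cancel_mono (retraction i)]⟩

namespace HomologicalComplex

variable {C : Type*} [Category C] [Preadditive C] [HasBinaryBiproducts C]
  {ι : Type*} {c : ComplexShape ι} [DecidableRel c.Rel]

instance mono_homotopyCofiber_inr {F G : HomologicalComplex C c} (φ : F ⟶ G) :
    Mono (homotopyCofiber.inr φ) :=
  have (n : ι) : IsSplitMono ((homotopyCofiber.inr φ).f n) :=
    IsSplitMono.mk' ⟨homotopyCofiber.sndX φ n, homotopyCofiber.inrX_sndX φ n⟩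
  mono_of_mono_f _ fun _ ↦ inferInstance

noncomputable def homotopyIdZeroOfInjective (hc : ∀ j, ∃ i, c.Rel i j)
    (K : HomologicalComplex C c) [Injective K] : Homotopy (𝟙 K) 0 :=
  let r := Injective.factorThru (𝟙 K) (homotopyCofiber.inr (𝟙 K))
  (Homotopy.ofEq (by simp [r])).trans
    (((homotopyCofiber.inrCompHomotopy (𝟙 K) hc).compRight r).trans (.ofEq zero_comp))

lemma exactAt_of_injective [CategoryWithHomology C] (hc : ∀ j, ∃ i, c.Rel i j)
    (K : HomologicalComplex C c) [Injective K] (n : ι) : K.ExactAt n := by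
  rw [exactAt_iff_isZero_homology, IsZero.iff_id_eq_zero, ← homologyMap_id,
    (homotopyIdZeroOfInjective hc K).homologyMap_eq, homologyMap_zero]

end HomologicalComplex

/-- If `X` is an `𝒳`-injective complex and `X ⊆ Y` with `Y/X` an `𝒳`-complex,
then `X` is a direct summand of `Y`; if moreover `Y` is an injective envelope of `X`
(injective and essential), then `X = E(X)` is injective, hence exact. -/
theorem stmt17 (𝒳 : Set (ModuleCat.{0} R)) (X Y : Cx R) (hX : XInjCx 𝒳 X)
    (i : X ⟶ Y) (hi : ∀ n, Function.Injective (i.f n))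
    (hq : ∀ n, ModuleCat.of R (↥(Y.X n) ⧸ LinearMap.range (i.f n).hom) ∈ 𝒳) :
    (∃ r : Y ⟶ X, i ≫ r = 𝟙 X) ∧
    (Injective Y → (∀ (Z : Cx R) (g : Y ⟶ Z), Mono (i ≫ g) → Mono g) →
      IsIso i ∧ Injective X ∧ ∀ n, X.ExactAt n) := by
  obtain ⟨r, hr⟩ := hX X Y i hi hq (𝟙 X)
  refine ⟨⟨r, hr⟩, fun hY hess => ?_⟩
  have : IsSplitMono i := IsSplitMono.mk' ⟨r, hr⟩
  have : IsIso i := isIso_of_isSplitMono_of_essential i hess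
  have : Injective X := Injective.of_iso (asIso i).symm hY
  exact ⟨inferInstance, inferInstance,
    X.exactAt_of_injective fun n ↦ ⟨n - 1, by simp⟩⟩
end
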